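/- Let (S_n) be the animal walk started at 0. For all integers y ≥ 1 and x ≥ 0, the probability that S enters the half-line (−∞,−y] strictly before reaching the singleton {x} equals x/(x+y+1). (Here the hitting time of {x} is the first n ≥ 0 with S_n = x, and of (−∞,−y] the first n ≥ 0 with S_n ≤ −y.) -/

import Mathlib

open MeasureTheory

/-- The animal walk: S 0 = 0 and S n = ξ 0 + … + ξ (n-1). -/
def walk {Ω : Type*} (ξ : ℕ → Ω → ℤ) (n : ℕ) (ω : Ω) : ℤ :=
  ∑ i ∈ Finset.range n, ξ i ω

/-- The step distribution μ of the animal walk, evaluated on the singleton {z}: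
μ({1}) = 2/3, μ({−k}) = 2^{−k}/3 for k ≥ 1, and 0 otherwise. -/
noncomputable def animalStepLaw (z : ℤ) : ENNReal :=
  if z = 1 then 2/3 else if z < 0 then (2 : ENNReal) ^ z / 3 else 0

/-!
The only upward step of μ is +1, so a walk started below x cannot jump over x. The function
h(b) = 1 for b ≤ a, h(b) = (x - b)/(x - a + 1) for a < b ≤ x is μ-harmonic on (a, x): the
negative part of μ is one third of a geometric law, whose memorylessness gives the identity
E h(b - G) = (x - b + 2)/(x - a + 1). By the Markov property (ξ 0 is independent of the shifted
sequence), the probabilities u n b of exiting below a before hitting x within n steps obey the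
same one-step recursion, hence u n ≤ h; and from any state of (a, x) the jump a - x leaves below
a, so h ≤ u n + (1 - μ{a - x}) ^ n. Letting n → ∞ and taking a = -y, b = 0 gives x/(x + y + 1).
-/

open ProbabilityTheory
open scoped ENNReal

theorem ENNReal.iSup_eq_of_forall_le_of_le_add_pow {f : ℕ → ℝ≥0∞} {c r : ℝ≥0∞} (hr : r < 1)
    (hle : ∀ n, f n ≤ c) (hge : ∀ n, c ≤ f n + r ^ n) : ⨆ n, f n = c := by
  refine le_antisymm (iSup_le hle) (ENNReal.le_of_forall_pos_le_add fun ε hε _ => ?_)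
  obtain ⟨n, hn⟩ := ((ENNReal.tendsto_pow_atTop_nhds_zero_of_lt_one hr).eventually_lt_const
    (by exact_mod_cast hε : (0 : ℝ≥0∞) < ε)).exists
  exact (hge n).trans (add_le_add (le_iSup f n) hn.le)

theorem ProbabilityTheory.iIndepFun.indepFun_head_tail {Ω β : Type*} {mΩ : MeasurableSpace Ω}
    [MeasurableSpace β] {P : Measure Ω} {f : ℕ → Ω → β} (hf : ∀ i, Measurable (f i))
    (h : iIndepFun f P) : IndepFun (f 0) (fun ω i => f (i + 1) ω) P := by
  refine indep_of_indep_of_le (indep_iSup_of_disjoint (fun i => (hf i).comap_le) h.iIndep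
    (S := {0}) (T := Set.Ioi 0) (by simp)) (le_iSup₂_of_le 0 rfl le_rfl) ?_
  rw [MeasurableSpace.pi, MeasurableSpace.comap_iSup]
  refine iSup_le fun i => ?_
  rw [MeasurableSpace.comap_comp]
  exact le_iSup₂_of_le (i + 1) (Nat.succ_pos i) le_rfl

theorem walk_zero {Ω : Type*} (ξ : ℕ → Ω → ℤ) (ω : Ω) : walk ξ 0 ω = 0 := by
  simp [walk]

theorem walk_succ' {Ω : Type*} (ξ : ℕ → Ω → ℤ) (n : ℕ) (ω : Ω) :
    walk ξ (n + 1) ω = ξ 0 ω + walk (fun i => ξ (i + 1)) n ω := by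
  rw [walk, walk, Finset.sum_range_succ', add_comm]

theorem measurable_walk {Ω : Type*} [MeasurableSpace Ω] {ξ : ℕ → Ω → ℤ}
    (hξ : ∀ i, Measurable (ξ i)) (n : ℕ) : Measurable (walk ξ n) :=
  Finset.measurable_sum _ fun i _ => hξ i

def exitEvent {Ω : Type*} (ξ : ℕ → Ω → ℤ) (x a b : ℤ) (n : ℕ) : Set Ω :=
  {ω | ∃ k ≤ n, b + walk ξ k ω ≤ a ∧ ∀ m ≤ k, b + walk ξ m ω ≠ x}

section exitEvent

variable {Ω : Type*} {ξ : ℕ → Ω → ℤ} {x a b : ℤ}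

theorem exitEvent_mono (ξ : ℕ → Ω → ℤ) (x a b : ℤ) : Monotone (exitEvent ξ x a b) :=
  fun _ _ hnn' _ ⟨k, hk, hω⟩ => ⟨k, hk.trans hnn', hω⟩

theorem exitEvent_self (n : ℕ) : exitEvent ξ x a x n = ∅ :=
  Set.eq_empty_of_forall_notMem fun ω ⟨_, _, _, hω⟩ => hω 0 (Nat.zero_le _) (by simp [walk_zero])

theorem exitEvent_of_le (n : ℕ) (hba : b ≤ a) (hbx : b ≠ x) : exitEvent ξ x a b n = Set.univ :=
  Set.eq_univ_of_forall fun ω => ⟨0, Nat.zero_le _, by simpa [walk_zero] using hba, fun m hm => by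
    simpa [Nat.le_zero.1 hm, walk_zero] using hbx⟩

theorem exitEvent_zero_of_lt (hab : a < b) : exitEvent ξ x a b 0 = ∅ :=
  Set.eq_empty_of_forall_notMem fun ω ⟨k, hk, hω, _⟩ => by
    rw [Nat.le_zero.1 hk, walk_zero] at hω; omega

theorem exitEvent_succ_of_lt (n : ℕ) (hab : a < b) (hbx : b ≠ x) :
    exitEvent ξ x a b (n + 1) =
      ⋃ z, {ω | ξ 0 ω = z} ∩ exitEvent (fun i => ξ (i + 1)) x a (b + z) n := by
  ext ω
  simp only [exitEvent, Set.mem_iUnion, Set.mem_inter_iff, Set.mem_ofPred_eq, exists_eq_left']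
  constructor
  · rintro ⟨_ | k, hk, hexit, havoid⟩
    · rw [walk_zero] at hexit; omega
    refine ⟨k, by omega, by rwa [walk_succ', ← add_assoc] at hexit, fun m hm => ?_⟩
    simpa [walk_succ', add_assoc] using havoid (m + 1) (by omega)
  · rintro ⟨k, hk, hexit, havoid⟩
    refine ⟨k + 1, by omega, by rwa [walk_succ', ← add_assoc], fun m hm => ?_⟩
    rcases m with _ | m
    · simpa [walk_zero] using hbx
    · simpa [walk_succ', add_assoc] using havoid m (by omega)

theorem measurableSet_exitEvent [MeasurableSpace Ω] (hξ : ∀ i, Measurable (ξ i)) (n : ℕ) :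
    MeasurableSet (exitEvent ξ x a b n) := by
  have hw (k : ℕ) (s : Set ℤ) : MeasurableSet (walk ξ k ⁻¹' s) :=
    measurable_walk hξ k .of_discrete
  simp only [exitEvent, Set.ofPred_exists, Set.ofPred_and, Set.ofPred_forall]
  exact .iUnion fun k => (MeasurableSet.const _).inter <| (hw k {z | b + z ≤ a}).inter <|
    .iInter fun m => .iInter fun _ => hw m {z | b + z ≠ x}

end exitEvent

noncomputable def exitWithin (p : ℤ → ℝ≥0∞) (x a : ℤ) : ℕ → ℤ → ℝ≥0∞
  | 0, b => if b = x then 0 else if b ≤ a then 1 else 0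
  | n + 1, b => if b = x then 0 else if b ≤ a then 1 else ∑' z, p z * exitWithin p x a n (b + z)

section exitWithin

variable {p : ℤ → ℝ≥0∞} {x a b : ℤ}

@[simp]
theorem exitWithin_self (n : ℕ) : exitWithin p x a n x = 0 := by
  cases n <;> simp [exitWithin]

theorem exitWithin_of_le (n : ℕ) (hba : b ≤ a) (hbx : b ≠ x) : exitWithin p x a n b = 1 := by
  cases n <;> simp [exitWithin, hba, hbx]

theorem exitWithin_zero_of_lt (hab : a < b) : exitWithin p x a 0 b = 0 := by
  simp [exitWithin, hab.not_ge]

theorem exitWithin_succ_of_lt (n : ℕ) (hab : a < b) (hbx : b ≠ x) :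
    exitWithin p x a (n + 1) b = ∑' z, p z * exitWithin p x a n (b + z) := by
  simp [exitWithin, hab.not_ge, hbx]

end exitWithin

section measure_exitEvent

variable {Ω : Type*} [MeasurableSpace Ω] {P : Measure Ω}
  {p : ℤ → ℝ≥0∞} {x a : ℤ}

theorem measure_exitEvent_succ_of_lt {ξ : ℕ → Ω → ℤ} (hξ : ∀ i, Measurable (ξ i))
    (hindep : iIndepFun ξ P) {b : ℤ} (n : ℕ) (hab : a < b) (hbx : b ≠ x) :
    P (exitEvent ξ x a b (n + 1)) =
      ∑' z, P {ω | ξ 0 ω = z} * P (exitEvent (fun i => ξ (i + 1)) x a (b + z) n) := by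
  rw [exitEvent_succ_of_lt n hab hbx, measure_iUnion]
  · refine tsum_congr fun z => ?_
    exact (hindep.indepFun_head_tail hξ).measure_inter_preimage_eq_mul _ _
      (measurableSet_singleton z)
      (measurableSet_exitEvent (ξ := fun i (s : ℕ → ℤ) => s i) (fun i => measurable_pi_apply i) n)
  · exact fun z z' hzz' => Set.disjoint_left.2 fun ω hz hz' => hzz' (hz.1.symm.trans hz'.1)
  · exact fun z => (hξ 0 (measurableSet_singleton z)).inter
      (measurableSet_exitEvent (fun i => hξ (i + 1)) n)

theorem measure_exitEvent [IsProbabilityMeasure P] (ξ : ℕ → Ω → ℤ) (hξ : ∀ i, Measurable (ξ i))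
    (hindep : iIndepFun ξ P) (hlaw : ∀ i z, P {ω | ξ i ω = z} = p z) (n : ℕ) (b : ℤ) :
    P (exitEvent ξ x a b n) = exitWithin p x a n b := by
  induction n generalizing ξ b with
  | zero =>
    rcases eq_or_ne b x with rfl | hbx
    · simp [exitEvent_self]
    rcases le_or_gt b a with hba | hab
    · rw [exitEvent_of_le _ hba hbx, exitWithin_of_le _ hba hbx, measure_univ]
    · rw [exitEvent_zero_of_lt hab, exitWithin_zero_of_lt hab, measure_empty]
  | succ n ih =>
    rcases eq_or_ne b x with rfl | hbx
    · simp [exitEvent_self]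
    rcases le_or_gt b a with hba | hab
    · rw [exitEvent_of_le _ hba hbx, exitWithin_of_le _ hba hbx, measure_univ]
    rw [measure_exitEvent_succ_of_lt hξ hindep n hab hbx, exitWithin_succ_of_lt n hab hbx]
    refine tsum_congr fun z => ?_
    rw [hlaw, ih _ (fun i => hξ (i + 1)) (hindep.precomp Nat.succ_injective)
      (fun i => hlaw (i + 1))]

end measure_exitEvent

/-- `geomTail f b = E f (b - G)` for `G` geometric on `{1, 2, …}` with parameter `1/2`; the
negative part of `animalStepLaw` is one third of the law of `-G`. -/
noncomputable def geomTail (f : ℤ → ℝ≥0∞) (b : ℤ) : ℝ≥0∞ :=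
  ∑' k : ℕ, 2⁻¹ ^ (k + 1) * f (b - (k + 1))

theorem geomTail_succ (f : ℤ → ℝ≥0∞) (b : ℤ) :
    geomTail f (b + 1) = 2⁻¹ * f b + 2⁻¹ * geomTail f b := by
  rw [geomTail, tsum_eq_zero_add' ENNReal.summable, geomTail, ← ENNReal.tsum_mul_left]
  congr 1
  · simp
  · refine tsum_congr fun k => ?_
    rw [pow_succ', mul_assoc]
    push_cast
    ring_nf

theorem geomTail_const (c : ℝ≥0∞) (b : ℤ) : geomTail (fun _ => c) b = c := by
  rw [geomTail, ENNReal.tsum_mul_right, ENNReal.tsum_geometric_add_one, ENNReal.one_sub_inv_two,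
    inv_inv, ENNReal.inv_mul_cancel (by norm_num) (by norm_num), one_mul]

theorem animalStepLaw_neg_succ (k : ℕ) :
    animalStepLaw (-(k + 1)) = 2⁻¹ ^ (k + 1) / 3 := by
  rw [animalStepLaw, if_neg (by omega), if_pos (by omega), ← Nat.cast_succ, ENNReal.zpow_neg,
    zpow_natCast, ENNReal.inv_pow]

theorem animalStepLaw_natCast {n : ℕ} (hn : n ≠ 1) : animalStepLaw n = 0 := by
  rw [animalStepLaw, if_neg (by omega), if_neg (by omega)]

theorem tsum_animalStepLaw_mul (f : ℤ → ℝ≥0∞) (b : ℤ) :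
    ∑' z, animalStepLaw z * f (b + z) = 2 / 3 * f (b + 1) + 3⁻¹ * geomTail f b := by
  rw [tsum_of_nat_of_neg_add_one ENNReal.summable ENNReal.summable,
    tsum_eq_single 1 fun n hn => by rw [animalStepLaw_natCast hn, zero_mul], geomTail,
    ← ENNReal.tsum_mul_left]
  congr 1
  refine tsum_congr fun k => ?_
  rw [animalStepLaw_neg_succ, ← sub_eq_add_neg, div_eq_mul_inv]
  ring

theorem tsum_animalStepLaw : ∑' z, animalStepLaw z = 1 := by
  have hsplit := tsum_animalStepLaw_mul (fun _ => 1) 0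
  simp only [mul_one, geomTail_const] at hsplit
  rw [hsplit, ← one_div, ENNReal.div_add_div_same, show (2 : ℝ≥0∞) + 1 = 3 by norm_num,
    ENNReal.div_self (by norm_num) (by norm_num)]

theorem le_one_of_animalStepLaw_ne_zero {z : ℤ} (hz : animalStepLaw z ≠ 0) : z ≤ 1 := by
  contrapose! hz
  rw [animalStepLaw, if_neg (by omega), if_neg (by omega)]

theorem animalStepLaw_ne_zero_of_neg {z : ℤ} (hz : z < 0) : animalStepLaw z ≠ 0 := by
  rw [animalStepLaw, if_neg (by omega), if_pos hz]
  exact ENNReal.div_ne_zero.2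
    ⟨(ENNReal.zpow_pos two_ne_zero ENNReal.ofNat_ne_top z).ne', by norm_num⟩

noncomputable def exitHarmonic (x a b : ℤ) : ℝ≥0∞ :=
  if b ≤ a then 1 else ((x - b).toNat : ℝ≥0∞) / (x - a + 1).toNat

section exitHarmonic

variable {x a b : ℤ}

theorem exitHarmonic_le_one : exitHarmonic x a b ≤ 1 := by
  rw [exitHarmonic]
  split_ifs with hba
  · exact le_rfl
  · exact ENNReal.div_le_of_le_mul (by rw [one_mul]; exact_mod_cast (by omega))

theorem geomTail_exitHarmonic (hab : a < b) (hbx : b ≤ x + 1) :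
    geomTail (exitHarmonic x a) b = ((x - b + 2).toNat : ℝ≥0∞) / (x - a + 1).toNat := by
  induction b, Int.add_one_le_of_lt hab using Int.leInduction with
  | base =>
    have hD : ((x - a + 1).toNat : ℝ≥0∞) ≠ 0 := by exact_mod_cast (by omega)
    have hconst : geomTail (exitHarmonic x a) (a + 1) = geomTail (fun _ => 1) (a + 1) :=
      tsum_congr fun k => by rw [exitHarmonic, if_pos (by omega)]
    rw [hconst, geomTail_const, show x - (a + 1) + 2 = x - a + 1 by ring,
      ENNReal.div_self hD (ENNReal.natCast_ne_top _)]
  | succ b hab ih =>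
    rw [geomTail_succ, ih (by omega) (by omega), exitHarmonic, if_neg (by omega), ← mul_add,
      ENNReal.div_add_div_same, ← Nat.cast_add,
      show (x - b).toNat + (x - b + 2).toNat = 2 * (x - (b + 1) + 2).toNat by omega, Nat.cast_mul,
      mul_div_assoc, ← mul_assoc, Nat.cast_ofNat,
      ENNReal.inv_mul_cancel (by norm_num) (by norm_num), one_mul]

theorem tsum_animalStepLaw_mul_exitHarmonic (hab : a < b) (hbx : b < x) :
    ∑' z, animalStepLaw z * exitHarmonic x a (b + z) = exitHarmonic x a b := by
  obtain ⟨c, hc⟩ : ∃ c : ℕ, x - b = c + 1 := ⟨(x - b - 1).toNat, by omega⟩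
  rw [tsum_animalStepLaw_mul, geomTail_exitHarmonic hab (by omega), exitHarmonic, if_neg (by omega),
    exitHarmonic, if_neg (by omega), show (x - (b + 1)).toNat = c by omega,
    show (x - b + 2).toNat = c + 3 by omega, show (x - b).toNat = c + 1 by omega,
    ← mul_div_assoc, ← mul_div_assoc, ENNReal.div_add_div_same]
  congr 1
  push_cast
  rw [ENNReal.div_eq_inv_mul, mul_assoc, ← mul_add,
    show 2 * (c : ℝ≥0∞) + (c + 3) = 3 * (c + 1) by ring, ← mul_assoc,
    ENNReal.inv_mul_cancel (by norm_num) (by norm_num), one_mul]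

theorem exitHarmonic_self (hax : a < x) : exitHarmonic x a x = 0 := by
  simp [exitHarmonic, hax.not_ge]

theorem exitWithin_le_exitHarmonic (n : ℕ) :
    ∀ b ≤ x, exitWithin animalStepLaw x a n b ≤ exitHarmonic x a b := by
  induction n with
  | zero =>
    intro b _
    rcases eq_or_ne b x with rfl | hne
    · rw [exitWithin_self]; exact zero_le
    rcases le_or_gt b a with hba | hab
    · rw [exitWithin_of_le _ hba hne, exitHarmonic, if_pos hba]
    · rw [exitWithin_zero_of_lt hab]; exact zero_le
  | succ n ih =>
    intro b hbx
    rcases eq_or_ne b x with rfl | hne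
    · rw [exitWithin_self]; exact zero_le
    rcases le_or_gt b a with hba | hab
    · rw [exitWithin_of_le _ hba hne, exitHarmonic, if_pos hba]
    rw [exitWithin_succ_of_lt _ hab hne]
    calc ∑' z, animalStepLaw z * exitWithin animalStepLaw x a n (b + z)
        ≤ ∑' z, animalStepLaw z * exitHarmonic x a (b + z) := by
          refine ENNReal.tsum_le_tsum fun z => ?_
          by_cases hz : animalStepLaw z = 0
          · simp [hz]
          · have hz1 := le_one_of_animalStepLaw_ne_zero hz
            exact mul_le_mul_right (ih _ (by omega)) _
      _ = exitHarmonic x a b := tsum_animalStepLaw_mul_exitHarmonic hab (by omega)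

theorem tsum_animalStepLaw_ite_le (hbx : b < x) :
    ∑' z, (if a < b + z then animalStepLaw z else 0) ≤ 1 - animalStepLaw (a - x) := by
  refine ENNReal.le_sub_of_add_le_right (ne_top_of_le_ne_top ENNReal.one_ne_top
    (tsum_animalStepLaw ▸ ENNReal.le_tsum _)) ?_
  conv_rhs => rw [← tsum_animalStepLaw, ENNReal.tsum_eq_add_tsum_ite (a - x)]
  refine (add_comm _ _).le.trans (add_le_add_right (ENNReal.tsum_le_tsum fun z => ?_) _)
  split_ifs <;> first | omega | exact le_rfl | exact zero_le

-- The error term vanishes once the walk is in `(-∞, a]`; this is what lets it contract by the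
-- factor `1 - μ{a - x}` at every step.
theorem exitHarmonic_le_exitWithin_add (hax : a < x) (n : ℕ) :
    ∀ b ≤ x, exitHarmonic x a b ≤
      exitWithin animalStepLaw x a n b + if a < b then (1 - animalStepLaw (a - x)) ^ n else 0 := by
  induction n with
  | zero =>
    intro b _
    rcases le_or_gt b a with hba | hab
    · rw [exitHarmonic, if_pos hba, exitWithin_of_le _ hba (by omega)]; exact le_self_add
    · rw [exitWithin_zero_of_lt hab, if_pos hab, zero_add, pow_zero]
      exact exitHarmonic_le_one
  | succ n ih =>
    intro b hbx
    rcases eq_or_ne b x with rfl | hne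
    · rw [exitHarmonic_self hax]; exact zero_le
    rcases le_or_gt b a with hba | hab
    · rw [exitHarmonic, if_pos hba, exitWithin_of_le _ hba hne]; exact le_self_add
    rw [exitWithin_succ_of_lt _ hab hne, if_pos hab]
    calc exitHarmonic x a b
        = ∑' z, animalStepLaw z * exitHarmonic x a (b + z) :=
          (tsum_animalStepLaw_mul_exitHarmonic hab (by omega)).symm
      _ ≤ ∑' z, animalStepLaw z * (exitWithin animalStepLaw x a n (b + z) +
            if a < b + z then (1 - animalStepLaw (a - x)) ^ n else 0) := by
          refine ENNReal.tsum_le_tsum fun z => ?_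
          by_cases hz : animalStepLaw z = 0
          · simp [hz]
          · have hz1 := le_one_of_animalStepLaw_ne_zero hz
            exact mul_le_mul_right (ih _ (by omega)) _
      _ = ∑' z, animalStepLaw z * exitWithin animalStepLaw x a n (b + z) +
            (∑' z, if a < b + z then animalStepLaw z else 0) * (1 - animalStepLaw (a - x)) ^ n := by
          simp only [mul_add, mul_ite, mul_zero]
          rw [ENNReal.tsum_add, ← ENNReal.tsum_mul_right]
          simp only [ite_mul, zero_mul]
      _ ≤ _ := by
          rw [pow_succ']
          gcongr
          exact tsum_animalStepLaw_ite_le (by omega)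

theorem iSup_exitWithin_animalStepLaw (hax : a < x) (hbx : b ≤ x) :
    ⨆ n, exitWithin animalStepLaw x a n b = exitHarmonic x a b := by
  have hr : 1 - animalStepLaw (a - x) < 1 := ENNReal.sub_lt_self ENNReal.one_ne_top one_ne_zero
    (animalStepLaw_ne_zero_of_neg (by omega))
  refine ENNReal.iSup_eq_of_forall_le_of_le_add_pow hr
    (fun n => exitWithin_le_exitHarmonic n b hbx) fun n => ?_
  refine (exitHarmonic_le_exitWithin_add hax n b hbx).trans (add_le_add_right ?_ _)
  split_ifs
  exacts [le_rfl, zero_le]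

end exitHarmonic

theorem animal_walk_exit_problem
    {Ω : Type*} [MeasurableSpace Ω] (P : Measure Ω) [IsProbabilityMeasure P]
    (ξ : ℕ → Ω → ℤ) (hmeas : ∀ i, Measurable (ξ i))
    (hindep : ProbabilityTheory.iIndepFun ξ P)
    (hlaw : ∀ i, ∀ z : ℤ, P {ω | ξ i ω = z} = animalStepLaw z)
    (x y : ℕ) (hy : 1 ≤ y) :
    P {ω | ∃ n : ℕ, walk ξ n ω ≤ -(y : ℤ) ∧ ∀ m ≤ n, walk ξ m ω ≠ (x : ℤ)} =
      (x : ENNReal) / ((x : ENNReal) + (y : ENNReal) + 1) := by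
  have hevent : {ω | ∃ n : ℕ, walk ξ n ω ≤ -(y : ℤ) ∧ ∀ m ≤ n, walk ξ m ω ≠ (x : ℤ)} =
      ⋃ n, exitEvent ξ x (-y) 0 n := by
    ext ω
    simp only [exitEvent, zero_add, Set.mem_iUnion, Set.mem_ofPred_eq]
    exact ⟨fun ⟨k, hk⟩ => ⟨k, k, le_rfl, hk⟩, fun ⟨_, k, _, hk⟩ => ⟨k, hk⟩⟩
  rw [hevent, (exitEvent_mono ξ _ _ _).measure_iUnion]
  simp only [measure_exitEvent ξ hmeas hindep hlaw]
  rw [iSup_exitWithin_animalStepLaw (by omega) (by omega), exitHarmonic, if_neg (by omega),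
    show ((x : ℤ) - 0).toNat = x by omega, show ((x : ℤ) - -y + 1).toNat = x + y + 1 by omega]
  norm_cast
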